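/- Let K, L be convex bodies in ℝ³ containing the origin in their interiors. If K is in the class ℜ₁ with respect to L, then for every t ≥ 0, K is in the class ℜ₁ with respect to L + tK; explicitly, if the relative quermassintegrals of K with respect to L are W₀, W₁, W₂, W₃ and B₀(r) = 2W₁ r − W₀ − W₂ r² ≥ 0 on [r_o(K,L), R_o(K,L)], then 2W₁' r − W₀ − W₂' r² ≥ 0 for all r ∈ [r_o(K, L+tK), R_o(K, L+tK)], where W₁' = W₁ + t V(K) and W₂' = W₂ + 2t W₁ + t² V(K) are the first and second relative quermassintegrals of K with respect to L + tK. -/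

import Mathlib

/-!
Since `h_{L+tK} = h_L + t h_K`, the ratio `h_K / h_{L+tK}` is `φ(h_K / h_L)` with
`φ(r) = r / (1 + t r)`, an increasing map of `[0, ∞)`; hence
`[r_o(K, L+tK), R_o(K, L+tK)] ⊆ [φ(r_o(K,L)), φ(R_o(K,L))] = φ([r_o(K,L), R_o(K,L)])`.
As `V(K) = W₀`, the new quadratic `B₀'(r) = 2W₁' r − W₀ − W₂' r²` satisfies
`B₀'(φ(r)) = B₀(r) / (1 + t r)²`, so it inherits nonnegativity from `B₀`.
-/

open scoped Pointwise RealInnerProductSpace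
open MeasureTheory Metric

noncomputable section

/-- The support function `h_K(u) = sup_{x ∈ K} ⟨x, u⟩` of a set `K ⊆ ℝ³`. -/
def supp (K : Set (EuclideanSpace ℝ (Fin 3))) (u : EuclideanSpace ℝ (Fin 3)) : ℝ :=
  sSup ((fun x => ⟪x, u⟫) '' K)

/-- `r_o(K,L) = min_{u ∈ S²} h_K(u)/h_L(u)`. -/
def rIn (K L : Set (EuclideanSpace ℝ (Fin 3))) : ℝ :=
  sInf ((fun u => supp K u / supp L u) '' sphere (0 : EuclideanSpace ℝ (Fin 3)) 1)

/-- `R_o(K,L) = max_{u ∈ S²} h_K(u)/h_L(u)`. -/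
def rOut (K L : Set (EuclideanSpace ℝ (Fin 3))) : ℝ :=
  sSup ((fun u => supp K u / supp L u) '' sphere (0 : EuclideanSpace ℝ (Fin 3)) 1)

section RealAlgebra

lemma div_one_add_mul_le_div_one_add_mul {t x y : ℝ} (ht : 0 ≤ t) (hx : 0 ≤ x) (hxy : x ≤ y) :
    x / (1 + t * x) ≤ y / (1 + t * y) := by
  have hy : 0 ≤ y := hx.trans hxy
  rw [div_le_div_iff₀ (by positivity) (by positivity)]
  nlinarith

lemma div_add_mul_eq_div_one_add_mul_div {a b t : ℝ} (hb : 0 < b) (ha : 0 ≤ a) (ht : 0 ≤ t) :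
    a / (b + t * a) = a / b / (1 + t * (a / b)) := by
  have : 0 < b + t * a := by positivity
  field_simp

lemma exists_mem_Icc_eq_div_one_add_mul {t a b r' : ℝ} (ht : 0 ≤ t) (ha : 0 ≤ a) (hb : 0 ≤ b)
    (hr' : r' ∈ Set.Icc (a / (1 + t * a)) (b / (1 + t * b))) :
    ∃ r ∈ Set.Icc a b, r' = r / (1 + t * r) := by
  obtain ⟨hlow, hhigh⟩ := hr'
  have hr'0 : 0 ≤ r' := (div_nonneg ha (by positivity)).trans hlow
  have hlow' := (div_le_iff₀ (by positivity)).mp hlow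
  have hhigh' := (le_div_iff₀ (by positivity)).mp hhigh
  have hd : 0 < 1 - t * r' := by
    by_contra! h
    nlinarith [mul_nonneg ht hr'0, mul_nonpos_of_nonneg_of_nonpos hb h]
  -- `r' ↦ r' / (1 - t r')` inverts `φ`
  refine ⟨r' / (1 - t * r'), ⟨?_, ?_⟩, ?_⟩
  · rw [le_div_iff₀ hd]; nlinarith
  · rw [div_le_iff₀ hd]; nlinarith
  · have : 1 + t * (r' / (1 - t * r')) = 1 / (1 - t * r') := by field_simp; ring
    rw [this, div_div_eq_mul_div, div_mul_cancel₀ _ hd.ne', div_one]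

lemma quadratic_div_one_add_mul {W₀ W₁ W₂ t r : ℝ} (h : 1 + t * r ≠ 0) :
    2 * (W₁ + t * W₀) * (r / (1 + t * r)) - W₀
        - (W₂ + 2 * t * W₁ + t ^ 2 * W₀) * (r / (1 + t * r)) ^ 2
      = (2 * W₁ * r - W₀ - W₂ * r ^ 2) / (1 + t * r) ^ 2 := by
  field_simp
  ring

lemma quadratic_nonneg_on_Icc_div_one_add_mul {W₀ W₁ W₂ t a b : ℝ} (ht : 0 ≤ t) (ha : 0 ≤ a)
    (hb : 0 ≤ b) (hB : ∀ r ∈ Set.Icc a b, 2 * W₁ * r - W₀ - W₂ * r ^ 2 ≥ 0) :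
    ∀ r' ∈ Set.Icc (a / (1 + t * a)) (b / (1 + t * b)),
      2 * (W₁ + t * W₀) * r' - W₀ - (W₂ + 2 * t * W₁ + t ^ 2 * W₀) * r' ^ 2 ≥ 0 := by
  intro r' hr'
  obtain ⟨r, hr, rfl⟩ := exists_mem_Icc_eq_div_one_add_mul ht ha hb hr'
  have hr0 : 0 ≤ r := ha.trans hr.1
  rw [quadratic_div_one_add_mul (by positivity)]
  exact div_nonneg (hB r hr) (by positivity)

end RealAlgebra

section SupportFunction

variable {K L : Set (EuclideanSpace ℝ (Fin 3))}

lemma bddAbove_inner_image (hK : IsCompact K) (u : EuclideanSpace ℝ (Fin 3)) :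
    BddAbove ((fun x => ⟪x, u⟫) '' K) :=
  (hK.image (continuous_id.inner continuous_const)).bddAbove

lemma inner_le_supp (hK : IsCompact K) {x : EuclideanSpace ℝ (Fin 3)} (hx : x ∈ K)
    (u : EuclideanSpace ℝ (Fin 3)) : ⟪x, u⟫ ≤ supp K u :=
  le_csSup (bddAbove_inner_image hK u) (Set.mem_image_of_mem _ hx)

lemma supp_nonneg (hK : IsCompact K) (hK0 : 0 ∈ K) (u : EuclideanSpace ℝ (Fin 3)) :
    0 ≤ supp K u := by
  simpa using inner_le_supp hK hK0 u

lemma exists_pos_le_supp (hK : IsCompact K) (hK0 : 0 ∈ interior K) :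
    ∃ ε > 0, ∀ u ∈ sphere (0 : EuclideanSpace ℝ (Fin 3)) 1, ε ≤ supp K u := by
  obtain ⟨ε, hε, hball⟩ := Metric.isOpen_iff.mp isOpen_interior 0 hK0
  refine ⟨ε / 2, half_pos hε, fun u hu => ?_⟩
  have hu1 : ‖u‖ = 1 := by simpa using hu
  have hmem : (ε / 2) • u ∈ K := by
    refine interior_subset (hball ?_)
    rw [mem_ball_zero_iff, norm_smul, hu1, mul_one, Real.norm_of_nonneg (half_pos hε).le]
    exact half_lt_self hε
  simpa [real_inner_smul_left, real_inner_self_eq_norm_sq, hu1] using inner_le_supp hK hmem u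

lemma exists_supp_le (hK : IsCompact K) (hKne : K.Nonempty) :
    ∃ M ≥ 0, ∀ u ∈ sphere (0 : EuclideanSpace ℝ (Fin 3)) 1, supp K u ≤ M := by
  obtain ⟨M, hM0, hM⟩ := hK.isBounded.exists_pos_norm_le
  refine ⟨M, hM0.le, fun u hu => csSup_le (hKne.image _) ?_⟩
  rintro _ ⟨x, hx, rfl⟩
  have hu1 : ‖u‖ = 1 := by simpa using hu
  calc ⟪x, u⟫ ≤ ‖x‖ * ‖u‖ := real_inner_le_norm x u
    _ ≤ M := by rw [hu1, mul_one]; exact hM x hx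

lemma supp_add_smul (hL : IsCompact L) (hLne : L.Nonempty) (hK : IsCompact K)
    (hKne : K.Nonempty) {t : ℝ} (ht : 0 ≤ t) (u : EuclideanSpace ℝ (Fin 3)) :
    supp (L + t • K) u = supp L u + t * supp K u := by
  have hcoe : ⇑(innerSL ℝ u) = fun x : EuclideanSpace ℝ (Fin 3) => ⟪x, u⟫ := by
    funext x
    exact real_inner_comm x u
  unfold supp
  rw [← hcoe, Set.image_add, image_smul_set,
    csSup_add (hLne.image _) (hcoe ▸ bddAbove_inner_image hL u) (hKne.image _).smul_set
      ((hcoe ▸ bddAbove_inner_image hK u).smul_of_nonneg ht),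
    Real.sSup_smul_of_nonneg ht, smul_eq_mul]

lemma supp_div_supp_nonneg (hK : IsCompact K) (hK0 : 0 ∈ K) (hL : IsCompact L) (hL0 : 0 ∈ L)
    (u : EuclideanSpace ℝ (Fin 3)) : 0 ≤ supp K u / supp L u :=
  div_nonneg (supp_nonneg hK hK0 u) (supp_nonneg hL hL0 u)

lemma bddAbove_supp_div_supp (hK : IsCompact K) (hKne : K.Nonempty) (hL : IsCompact L)
    (hL0 : 0 ∈ interior L) :
    BddAbove ((fun u => supp K u / supp L u) '' sphere (0 : EuclideanSpace ℝ (Fin 3)) 1) := by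
  obtain ⟨M, hM0, hM⟩ := exists_supp_le hK hKne
  obtain ⟨ε, hε, hLε⟩ := exists_pos_le_supp hL hL0
  refine ⟨M / ε, ?_⟩
  rintro _ ⟨u, hu, rfl⟩
  exact div_le_div₀ hM0 (hM u hu) hε (hLε u hu)

lemma supp_div_supp_add_smul (hK : IsCompact K) (hK0 : 0 ∈ K) (hL : IsCompact L)
    (hL0 : 0 ∈ interior L) {t : ℝ} (ht : 0 ≤ t) {u : EuclideanSpace ℝ (Fin 3)}
    (hu : u ∈ sphere (0 : EuclideanSpace ℝ (Fin 3)) 1) :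
    supp K u / supp (L + t • K) u
      = supp K u / supp L u / (1 + t * (supp K u / supp L u)) := by
  obtain ⟨ε, hε, hLε⟩ := exists_pos_le_supp hL hL0
  rw [supp_add_smul hL ⟨0, interior_subset hL0⟩ hK ⟨0, hK0⟩ ht]
  exact div_add_mul_eq_div_one_add_mul_div (hε.trans_le (hLε u hu)) (supp_nonneg hK hK0 u) ht

lemma rIn_nonneg (hK : IsCompact K) (hK0 : 0 ∈ K) (hL : IsCompact L) (hL0 : 0 ∈ L) :
    0 ≤ rIn K L :=
  Real.sInf_nonneg <| by
    rintro _ ⟨u, -, rfl⟩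
    exact supp_div_supp_nonneg hK hK0 hL hL0 u

lemma rOut_nonneg (hK : IsCompact K) (hK0 : 0 ∈ K) (hL : IsCompact L) (hL0 : 0 ∈ L) :
    0 ≤ rOut K L :=
  Real.sSup_nonneg <| by
    rintro _ ⟨u, -, rfl⟩
    exact supp_div_supp_nonneg hK hK0 hL hL0 u

lemma rIn_div_one_add_mul_le (hK : IsCompact K) (hK0 : 0 ∈ K) (hL : IsCompact L)
    (hL0 : 0 ∈ interior L) {t : ℝ} (ht : 0 ≤ t) :
    rIn K L / (1 + t * rIn K L) ≤ rIn K (L + t • K) := by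
  refine le_csInf ((NormedSpace.sphere_nonempty.mpr zero_le_one).image _) ?_
  rintro _ ⟨u, hu, rfl⟩
  have hbdd : BddBelow ((fun u => supp K u / supp L u) '' sphere 0 1) := by
    refine ⟨0, ?_⟩
    rintro _ ⟨v, -, rfl⟩
    exact supp_div_supp_nonneg hK hK0 hL (interior_subset hL0) v
  dsimp only
  rw [supp_div_supp_add_smul hK hK0 hL hL0 ht hu]
  exact div_one_add_mul_le_div_one_add_mul ht (rIn_nonneg hK hK0 hL (interior_subset hL0))
    (csInf_le hbdd ⟨u, hu, rfl⟩)

lemma rOut_add_smul_le (hK : IsCompact K) (hK0 : 0 ∈ K) (hL : IsCompact L)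
    (hL0 : 0 ∈ interior L) {t : ℝ} (ht : 0 ≤ t) :
    rOut K (L + t • K) ≤ rOut K L / (1 + t * rOut K L) := by
  refine csSup_le ((NormedSpace.sphere_nonempty.mpr zero_le_one).image _) ?_
  rintro _ ⟨u, hu, rfl⟩
  dsimp only
  rw [supp_div_supp_add_smul hK hK0 hL hL0 ht hu]
  exact div_one_add_mul_le_div_one_add_mul ht
    (supp_div_supp_nonneg hK hK0 hL (interior_subset hL0) u)
    (le_csSup (bddAbove_supp_div_supp hK ⟨0, hK0⟩ hL hL0) ⟨u, hu, rfl⟩)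

end SupportFunction

theorem class_R1_wrt_outer_parallel_body_general
    (K L : Set (EuclideanSpace ℝ (Fin 3)))
    (hKc : IsCompact K)
    (hLc : IsCompact L)
    (hK0 : (0 : EuclideanSpace ℝ (Fin 3)) ∈ interior K)
    (hL0 : (0 : EuclideanSpace ℝ (Fin 3)) ∈ interior L)
    (W₀ W₁ W₂ W₃ : ℝ)
    (hW : ∀ t : ℝ, 0 ≤ t →
      (volume (K + t • L)).toReal = W₀ + 3 * W₁ * t + 3 * W₂ * t ^ 2 + W₃ * t ^ 3)
    (hR1 : ∀ r ∈ Set.Icc (rIn K L) (rOut K L), 2 * W₁ * r - W₀ - W₂ * r ^ 2 ≥ 0) :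
    ∀ t : ℝ, 0 ≤ t →
      ∀ r ∈ Set.Icc (rIn K (L + t • K)) (rOut K (L + t • K)),
        2 * (W₁ + t * (volume K).toReal) * r - W₀
            - (W₂ + 2 * t * W₁ + t ^ 2 * (volume K).toReal) * r ^ 2 ≥ 0 := by
  intro t ht r hr
  have hK0' := interior_subset hK0
  have hL0' := interior_subset hL0
  have hV : (volume K).toReal = W₀ := by
    simpa [Set.zero_smul_set ⟨0, hL0'⟩] using hW 0 le_rfl
  rw [hV]
  exact quadratic_nonneg_on_Icc_div_one_add_mul ht (rIn_nonneg hKc hK0' hLc hL0')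
    (rOut_nonneg hKc hK0' hLc hL0') hR1 r
    ⟨(rIn_div_one_add_mul_le hKc hK0' hLc hL0 ht).trans hr.1,
      hr.2.trans (rOut_add_smul_le hKc hK0' hLc hL0 ht)⟩

/-- If `K` is in the class `ℜ₁` with respect to `L`, then for every `t ≥ 0`,
`K` is in the class `ℜ₁` with respect to `L + tK`, whose first and second relative
quermassintegrals are `W₁' = W₁ + t V(K)` and `W₂' = W₂ + 2t W₁ + t² V(K)`. -/
theorem class_R1_wrt_outer_parallel_body
    (K L : Set (EuclideanSpace ℝ (Fin 3)))
    (hKc : IsCompact K) (hKconv : Convex ℝ K) (hKint : (interior K).Nonempty)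
    (hLc : IsCompact L) (hLconv : Convex ℝ L) (hLint : (interior L).Nonempty)
    (hK0 : (0 : EuclideanSpace ℝ (Fin 3)) ∈ interior K)
    (hL0 : (0 : EuclideanSpace ℝ (Fin 3)) ∈ interior L)
    (W₀ W₁ W₂ W₃ : ℝ)
    (hW : ∀ t : ℝ, 0 ≤ t →
      (volume (K + t • L)).toReal = W₀ + 3 * W₁ * t + 3 * W₂ * t ^ 2 + W₃ * t ^ 3)
    (hR1 : ∀ r ∈ Set.Icc (rIn K L) (rOut K L), 2 * W₁ * r - W₀ - W₂ * r ^ 2 ≥ 0) :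
    ∀ t : ℝ, 0 ≤ t →
      ∀ r ∈ Set.Icc (rIn K (L + t • K)) (rOut K (L + t • K)),
        2 * (W₁ + t * (volume K).toReal) * r - W₀
            - (W₂ + 2 * t * W₁ + t ^ 2 * (volume K).toReal) * r ^ 2 ≥ 0 :=
  class_R1_wrt_outer_parallel_body_general K L hKc hLc hK0 hL0 W₀ W₁ W₂ W₃ hW hR1
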